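/- Let P ∈ ℝ^{N×N} be row-stochastic with rows p_1ᵀ, …, p_Nᵀ, let γ ∈ (0,1), n a positive integer, and let {X_{ij} : 1 ≤ i ≤ N, 1 ≤ j ≤ n} be mutually independent random vectors, each X_{ij} taking values among the standard basis vectors e_1, …, e_N of ℝ^N with ℙ[X_{ij} = e_k] = P_{ik}. Let P̂ be the random matrix whose i-th row is (1/n)Σ_{j=1}^{n} X_{ij}ᵀ, and set A = I − γP, Ŷ = γ(P − P̂)A^{-1}. Let M ∈ ℝ^{N×N} be symmetric positive definite, b ∈ ℝ^N, and Σ ∈ ℝ^{N×N} symmetric positive semidefinite. Define B_i = (1/n)(diag(p_i) − p_i p_iᵀ), G = γ² A^{-T}(Σ_{i=1}^{N} M_{ii} B_i)A^{-1}, and H = γ²(Σ_{i=1}^{N} A^{-T} B_i A^{-1} diag(e_i))M + γ² M(Σ_{i=1}^{N} diag(e_i) A^{-T} B_i A^{-1}). Then E[Ŷᵀ M Ŷ] = G and E[M Ŷ² + (Ŷᵀ)² M] = H, and consequently the second-order factor ε° := E[bᵀ(M + (M Ŷ² + (Ŷᵀ)² M)/2) b] / (E[bᵀ(M + Ŷᵀ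 M Ŷ + M Ŷ² + (Ŷᵀ)² M) b] + E[tr(Σ (M + Ŷᵀ M Ŷ + M Ŷ² + (Ŷᵀ)² M))]) equals bᵀ(M + H/2)b / (bᵀ(M + G + H)b + tr(Σ(M + G + H))) whenever this denominator is nonzero. -/

import Mathlib

open MeasureTheory ProbabilityTheory Matrix BigOperators

/-!
The centred sample matrix `D = P - P̂` has uncorrelated rows: `E[D_il D_i'l'] = δ_ii' (B_i)_ll'`.
Indeed row `i` of `D` is the average of the `n` independent centred one-hot vectors
`p_i - X_ij`, each of covariance `diag p_i - p_i p_iᵀ`, and vectors from different samples are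
uncorrelated by independence. This structure survives scaling and right multiplication, so
`Ŷ = γ D A⁻¹` has uncorrelated rows with second moments `γ² A⁻ᵀ B_i A⁻¹`. Every entry of
`ŶᵀMŶ`, `MŶ²` and `(Ŷᵀ)²M` is a bilinear form in the entries of `Ŷ`, and in its expectation only
the products of entries from the same row survive; this gives `G` and `H`. The value of the
second-order factor then follows from linearity of `F ↦ bᵀ F b` and `F ↦ tr (S F)`.
-/

section EntrywiseIntegral

variable {Ω m n : Type*} [MeasurableSpace Ω] {μ : Measure Ω}

def EntrywiseIntegrable (F : Ω → Matrix m n ℝ) (μ : Measure Ω) : Prop :=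
  ∀ j k, Integrable (fun ω => F ω j k) μ

noncomputable def entrywiseIntegral (μ : Measure Ω) (F : Ω → Matrix m n ℝ) : Matrix m n ℝ :=
  Matrix.of fun j k => ∫ ω, F ω j k ∂μ

lemma entrywiseIntegrable_const [IsFiniteMeasure μ] (C : Matrix m n ℝ) :
    EntrywiseIntegrable (fun _ => C) μ :=
  fun _ _ => integrable_const _

namespace EntrywiseIntegrable

variable {F F' : Ω → Matrix m n ℝ}

lemma add (hF : EntrywiseIntegrable F μ) (hF' : EntrywiseIntegrable F' μ) :
    EntrywiseIntegrable (fun ω => F ω + F' ω) μ :=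
  fun j k => (hF j k).add (hF' j k)

lemma const_smul (hF : EntrywiseIntegrable F μ) (c : ℝ) :
    EntrywiseIntegrable (fun ω => c • F ω) μ :=
  fun j k => (hF j k).const_mul c

end EntrywiseIntegrable

lemma entrywiseIntegral_add {F F' : Ω → Matrix m n ℝ} (hF : EntrywiseIntegrable F μ)
    (hF' : EntrywiseIntegrable F' μ) :
    entrywiseIntegral μ (fun ω => F ω + F' ω) = entrywiseIntegral μ F + entrywiseIntegral μ F' :=
  Matrix.ext fun j k => integral_add (hF j k) (hF' j k)

lemma entrywiseIntegral_const [IsProbabilityMeasure μ] (C : Matrix m n ℝ) :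
    entrywiseIntegral μ (fun _ => C) = C :=
  Matrix.ext fun j k => by simp [entrywiseIntegral]

lemma entrywiseIntegral_smul (c : ℝ) (F : Ω → Matrix m n ℝ) :
    entrywiseIntegral μ (fun ω => c • F ω) = c • entrywiseIntegral μ F :=
  Matrix.ext fun _ _ => integral_const_mul c _

variable [Fintype m] [Fintype n]

lemma integral_dotProduct_mulVec {F : Ω → Matrix m n ℝ} (hF : EntrywiseIntegrable F μ)
    (u : m → ℝ) (v : n → ℝ) :
    ∫ ω, u ⬝ᵥ (F ω *ᵥ v) ∂μ = u ⬝ᵥ (entrywiseIntegral μ F *ᵥ v) := by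
  simp only [dotProduct, mulVec, Finset.mul_sum]
  rw [integral_finsetSum _ fun j _ => integrable_finsetSum _ fun k _ =>
    ((hF j k).mul_const _).const_mul _]
  refine Finset.sum_congr rfl fun j _ => ?_
  rw [integral_finsetSum _ fun k _ => ((hF j k).mul_const _).const_mul _]
  refine Finset.sum_congr rfl fun k _ => ?_
  rw [integral_const_mul, integral_mul_const]
  rfl

lemma integral_trace_mul {F : Ω → Matrix n m ℝ} (hF : EntrywiseIntegrable F μ)
    (S : Matrix m n ℝ) :
    ∫ ω, trace (S * F ω) ∂μ = trace (S * entrywiseIntegral μ F) := by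
  simp only [trace, diag, mul_apply]
  rw [integral_finsetSum _ fun a _ => integrable_finsetSum _ fun k _ =>
    (hF k a).const_mul (S a k)]
  refine Finset.sum_congr rfl fun a _ => ?_
  rw [integral_finsetSum _ fun k _ => (hF k a).const_mul (S a k)]
  refine Finset.sum_congr rfl fun k _ => ?_
  rw [integral_const_mul]
  rfl

end EntrywiseIntegral

section SquareMatrix

variable {m : Type*} [Fintype m]

lemma transpose_mul_mul_apply (Y M : Matrix m m ℝ) (j k : m) :
    (Yᵀ * M * Y) j k = ∑ a, ∑ b, M a b * (Y a j * Y b k) := by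
  simp only [mul_apply, transpose_apply, Finset.sum_mul]
  rw [Finset.sum_comm]
  exact Finset.sum_congr rfl fun _ _ => Finset.sum_congr rfl fun _ _ => by ring

variable [DecidableEq m]

lemma mul_sq_apply (M Y : Matrix m m ℝ) (j k : m) :
    (M * Y ^ 2) j k = ∑ a, ∑ b, M j a * (Y a b * Y b k) := by
  simp only [sq, mul_apply, Finset.mul_sum]

lemma transpose_sq_mul_apply (Y M : Matrix m m ℝ) (j k : m) :
    (Yᵀ ^ 2 * M) j k = ∑ a, ∑ b, M b k * (Y a j * Y b a) := by
  simp only [sq, mul_apply, transpose_apply, Finset.sum_mul]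
  rw [Finset.sum_comm]
  exact Finset.sum_congr rfl fun _ _ => Finset.sum_congr rfl fun _ _ => by ring

lemma sum_single_mul_apply (C : m → Matrix m m ℝ) (a k : m) :
    (∑ i, single i i (1 : ℝ) * C i) a k = C a a k := by
  rw [Matrix.sum_apply, Finset.sum_eq_single a
    (fun i _ hi => single_mul_apply_of_ne 1 i i a k (Ne.symm hi) (C i)) (by simp)]
  simp

lemma sum_mul_single_apply (C : m → Matrix m m ℝ) (j a : m) :
    (∑ i, C i * single i i (1 : ℝ)) j a = C a j a := by
  rw [Matrix.sum_apply, Finset.sum_eq_single a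
    (fun i _ hi => mul_single_apply_of_ne 1 i i j a (Ne.symm hi) (C i)) (by simp)]
  simp

end SquareMatrix

section ConjugationAlgebra

variable {m n k : Type*} [Fintype m] [Fintype n]

lemma sum_smul_transpose_mul_smul_mul (M : Matrix m m ℝ) (B : m → Matrix n n ℝ)
    (W : Matrix n k ℝ) (c : ℝ) :
    ∑ i, M i i • (Wᵀ * (c • B i) * W) = c • (Wᵀ * (∑ i, M i i • B i) * W) := by
  simp only [Matrix.mul_sum, Matrix.sum_mul, Matrix.mul_smul, Matrix.smul_mul, Finset.smul_sum,
    smul_smul, mul_comm]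

lemma sum_conj_mul_single_mul_add_mul_sum_single_mul_conj [DecidableEq m] (M : Matrix m m ℝ)
    (B : m → Matrix n n ℝ) (W : Matrix n m ℝ) (c : ℝ) :
    (∑ i, Wᵀ * (c • B i) * W * single i i (1 : ℝ)) * M
        + M * ∑ i, single i i (1 : ℝ) * (Wᵀ * (c • B i) * W)
      = c • ((∑ i, Wᵀ * B i * W * single i i (1 : ℝ)) * M)
        + c • (M * ∑ i, single i i (1 : ℝ) * Wᵀ * B i * W) := by
  simp only [Matrix.mul_smul, Matrix.smul_mul, ← Finset.smul_sum, Matrix.mul_assoc]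

end ConjugationAlgebra

section UncorrelatedRows

variable {Ω m n : Type*} [MeasurableSpace Ω] {μ : Measure Ω} [DecidableEq m]

structure HasUncorrelatedRows (μ : Measure Ω) (Y : Ω → Matrix m n ℝ) (C : m → Matrix n n ℝ) :
    Prop where
  integrable_mul : ∀ i j i' j', Integrable (fun ω => Y ω i j * Y ω i' j') μ
  integral_mul : ∀ i j i' j', ∫ ω, Y ω i j * Y ω i' j' ∂μ = if i = i' then C i j j' else 0

namespace HasUncorrelatedRows

variable {Y : Ω → Matrix m n ℝ} {C : m → Matrix n n ℝ}

lemma smul (h : HasUncorrelatedRows μ Y C) (c : ℝ) :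
    HasUncorrelatedRows μ (fun ω => c • Y ω) (fun i => c ^ 2 • C i) := by
  have hpt : ∀ ω i j i' j', (c • Y ω) i j * (c • Y ω) i' j' = c ^ 2 * (Y ω i j * Y ω i' j') :=
    fun ω i j i' j' => by simp only [Matrix.smul_apply, smul_eq_mul]; ring
  refine ⟨fun i j i' j' => ?_, fun i j i' j' => ?_⟩
  · simpa only [hpt] using (h.integrable_mul i j i' j').const_mul (c ^ 2)
  · simp only [hpt, integral_const_mul, h.integral_mul, mul_ite, mul_zero]
    simp only [Matrix.smul_apply, smul_eq_mul]

lemma mul_right {k : Type*} [Fintype n] (h : HasUncorrelatedRows μ Y C) (W : Matrix n k ℝ) :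
    HasUncorrelatedRows μ (fun ω => Y ω * W) (fun i => Wᵀ * C i * W) := by
  have hpt : ∀ ω i j i' j', (Y ω * W) i j * (Y ω * W) i' j'
      = ∑ l, ∑ l', W l j * W l' j' * (Y ω i l * Y ω i' l') := fun ω i j i' j' => by
    simp only [mul_apply, Finset.sum_mul_sum]
    exact Finset.sum_congr rfl fun _ _ => Finset.sum_congr rfl fun _ _ => by ring
  have hint : ∀ i j i' j' l l', Integrable (fun ω => W l j * W l' j' * (Y ω i l * Y ω i' l')) μ :=
    fun i j i' j' l l' => (h.integrable_mul i l i' l').const_mul _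
  refine ⟨fun i j i' j' => ?_, fun i j i' j' => ?_⟩
  · simpa only [hpt] using integrable_finsetSum _ fun l _ => integrable_finsetSum _ fun l' _ =>
      hint i j i' j' l l'
  · simp only [hpt]
    rw [integral_finsetSum _ fun l _ => integrable_finsetSum _ fun l' _ => hint i j i' j' l l']
    simp only [integral_finsetSum _ fun l' _ => hint i j i' j' _ l', integral_const_mul,
      h.integral_mul, mul_ite, mul_zero]
    split_ifs
    · simp only [mul_apply, transpose_apply, Finset.sum_mul]
      rw [Finset.sum_comm]
      exact Finset.sum_congr rfl fun _ _ => Finset.sum_congr rfl fun _ _ => by ring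
    · simp

variable [Fintype m]

lemma integrable_sum_sum (h : HasUncorrelatedRows μ Y C) (c : m → m → ℝ) (f g : m → m → n) :
    Integrable (fun ω => ∑ a, ∑ b, c a b * (Y ω a (f a b) * Y ω b (g a b))) μ :=
  integrable_finsetSum _ fun _ _ => integrable_finsetSum _ fun _ _ =>
    (h.integrable_mul _ _ _ _).const_mul _

lemma integral_sum_sum (h : HasUncorrelatedRows μ Y C) (c : m → m → ℝ) (f g : m → m → n) :
    ∫ ω, ∑ a, ∑ b, c a b * (Y ω a (f a b) * Y ω b (g a b)) ∂μ
      = ∑ a, c a a * C a (f a a) (g a a) := by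
  rw [integral_finsetSum _ fun a _ => integrable_finsetSum _ fun b _ =>
    (h.integrable_mul _ _ _ _).const_mul _]
  simp only [integral_finsetSum _ fun b _ => (h.integrable_mul _ _ _ _).const_mul _,
    integral_const_mul, h.integral_mul, mul_ite, mul_zero, Finset.sum_ite_eq, Finset.mem_univ,
    if_true]

end HasUncorrelatedRows

end UncorrelatedRows

namespace HasUncorrelatedRows

variable {Ω m : Type*} [MeasurableSpace Ω] {μ : Measure Ω} [Fintype m] [DecidableEq m]
  {Y : Ω → Matrix m m ℝ} {C : m → Matrix m m ℝ}

lemma entrywiseIntegrable_transpose_mul_mul (h : HasUncorrelatedRows μ Y C) (M : Matrix m m ℝ) :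
    EntrywiseIntegrable (fun ω => (Y ω)ᵀ * M * Y ω) μ := fun j k => by
  simpa only [transpose_mul_mul_apply] using h.integrable_sum_sum M (fun _ _ => j) (fun _ _ => k)

lemma entrywiseIntegral_transpose_mul_mul (h : HasUncorrelatedRows μ Y C) (M : Matrix m m ℝ) :
    entrywiseIntegral μ (fun ω => (Y ω)ᵀ * M * Y ω) = ∑ i, M i i • C i := by
  ext j k
  simp only [entrywiseIntegral, of_apply, transpose_mul_mul_apply,
    h.integral_sum_sum M (fun _ _ => j) (fun _ _ => k), Matrix.sum_apply, Matrix.smul_apply,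
    smul_eq_mul]

lemma entrywiseIntegrable_mul_sq_add_transpose_sq_mul (h : HasUncorrelatedRows μ Y C)
    (M : Matrix m m ℝ) :
    EntrywiseIntegrable (fun ω => M * Y ω ^ 2 + (Y ω)ᵀ ^ 2 * M) μ := fun j k => by
  simpa only [Matrix.add_apply, Pi.add_def, mul_sq_apply, transpose_sq_mul_apply] using
    (h.integrable_sum_sum (fun a _ => M j a) (fun _ b => b) (fun _ _ => k)).add
      (h.integrable_sum_sum (fun _ b => M b k) (fun _ _ => j) (fun a _ => a))

lemma entrywiseIntegral_mul_sq_add_transpose_sq_mul (h : HasUncorrelatedRows μ Y C)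
    (M : Matrix m m ℝ) :
    entrywiseIntegral μ (fun ω => M * Y ω ^ 2 + (Y ω)ᵀ ^ 2 * M)
      = (∑ i, C i * single i i (1 : ℝ)) * M + M * ∑ i, single i i (1 : ℝ) * C i := by
  ext j k
  simp only [entrywiseIntegral, of_apply, Matrix.add_apply, mul_sq_apply, transpose_sq_mul_apply]
  rw [integral_add (h.integrable_sum_sum _ _ _) (h.integrable_sum_sum _ _ _),
    h.integral_sum_sum (fun a _ => M j a) (fun _ b => b) (fun _ _ => k),
    h.integral_sum_sum (fun _ b => M b k) (fun _ _ => j) (fun a _ => a), add_comm]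
  simp only [mul_apply, sum_single_mul_apply, sum_mul_single_apply, mul_comm]

end HasUncorrelatedRows

section OneHot

variable {Ω ι : Type*} [DecidableEq ι] {x : Ω → ι → ℝ}

lemma apply_eq_indicator_of_eq_single (hx : ∀ ω, ∃ k, x ω = Pi.single k 1) (l : ι) :
    (fun ω => x ω l) = {ω | x ω = Pi.single l 1}.indicator 1 := by
  funext ω
  obtain ⟨k, hk⟩ := hx ω
  rcases eq_or_ne k l with rfl | hkl
  · simp [hk]
  · have hne : x ω ≠ Pi.single l 1 := fun h => by
      simpa [hk, hkl] using congrFun h k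
    simp [hk, hkl, Set.indicator_of_notMem (s := {ω | x ω = Pi.single l 1}) hne]

lemma norm_apply_le_one_of_eq_single (hx : ∀ ω, ∃ k, x ω = Pi.single k 1) (ω : Ω) (l : ι) :
    ‖x ω l‖ ≤ 1 := by
  obtain ⟨k, hk⟩ := hx ω
  rw [hk, Pi.single_apply]
  split_ifs <;> simp

lemma mul_apply_of_eq_single (hx : ∀ ω, ∃ k, x ω = Pi.single k 1) (ω : Ω) (l l' : ι) :
    x ω l * x ω l' = if l = l' then x ω l else 0 := by
  obtain ⟨k, hk⟩ := hx ω
  simp only [hk, Pi.single_apply]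
  split_ifs <;> simp_all

variable [MeasurableSpace Ω] {μ : Measure Ω} [Countable ι]
variable (hxm : Measurable x) (hx : ∀ ω, ∃ k, x ω = Pi.single k 1)
include hxm hx

lemma integrable_apply_of_eq_single [IsFiniteMeasure μ] (l : ι) :
    Integrable (fun ω => x ω l) μ := by
  rw [apply_eq_indicator_of_eq_single hx]
  exact (integrable_const 1).indicator (hxm (measurableSet_singleton _))

lemma integrable_sub_apply_mul_sub_apply_of_eq_single [IsFiniteMeasure μ] {y : Ω → ι → ℝ}
    (hym : Measurable y) (hy : ∀ ω, ∃ k, y ω = Pi.single k 1) (a b : ℝ) (l l' : ι) :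
    Integrable (fun ω => (a - x ω l) * (b - y ω l')) μ :=
  ((integrable_const b).sub (integrable_apply_of_eq_single hym hy l')).bdd_mul
    (measurable_const.sub (measurable_pi_apply l |>.comp hxm)).aestronglyMeasurable
    (c := ‖a‖ + 1) (ae_of_all _ fun ω => (norm_sub_le _ _).trans
      (by gcongr; exact norm_apply_le_one_of_eq_single hx ω l))

variable {p : ι → ℝ} (hp0 : ∀ l, 0 ≤ p l)
  (hp : ∀ l, μ {ω | x ω = Pi.single l 1} = ENNReal.ofReal (p l))
include hp0 hp

lemma integral_apply_of_eq_single (l : ι) : ∫ ω, x ω l ∂μ = p l := by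
  rw [apply_eq_indicator_of_eq_single hx, integral_indicator_one (s := {ω | x ω = Pi.single l 1})
    (hxm (measurableSet_singleton _)), measureReal_def, hp, ENNReal.toReal_ofReal (hp0 l)]

lemma integral_sub_apply_of_eq_single [IsProbabilityMeasure μ] (l : ι) :
    ∫ ω, (p l - x ω l) ∂μ = 0 := by
  rw [integral_sub (integrable_const _) (integrable_apply_of_eq_single hxm hx l),
    integral_apply_of_eq_single hxm hx hp0 hp]
  simp

lemma integral_sub_apply_mul_sub_apply_of_eq_single [IsProbabilityMeasure μ] (l l' : ι) :
    ∫ ω, (p l - x ω l) * (p l' - x ω l') ∂μ = (if l = l' then p l else 0) - p l * p l' := by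
  have hpt : ∀ ω, (p l - x ω l) * (p l' - x ω l')
      = p l * p l' - (p l * x ω l' + p l' * x ω l) + x ω l * x ω l' := fun ω => by ring
  have hx2 : ∫ ω, x ω l * x ω l' ∂μ = if l = l' then p l else 0 := by
    simp only [mul_apply_of_eq_single hx]
    split_ifs
    · exact integral_apply_of_eq_single hxm hx hp0 hp l
    · exact integral_zero _ _
  have hint : ∀ l, Integrable (fun ω => x ω l) μ := integrable_apply_of_eq_single hxm hx
  have hint2 : Integrable (fun ω => x ω l * x ω l') μ := by
    simpa using integrable_sub_apply_mul_sub_apply_of_eq_single hxm hx hxm hx 0 0 l l'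
  have hlin : Integrable (fun ω => p l * x ω l' + p l' * x ω l) μ :=
    ((hint l').const_mul _).add ((hint l).const_mul _)
  have hconst_sub : Integrable (fun ω => p l * p l' - (p l * x ω l' + p l' * x ω l)) μ :=
    (integrable_const _).sub hlin
  simp only [hpt]
  rw [integral_add hconst_sub hint2, integral_sub (integrable_const _) hlin,
    integral_add ((hint l').const_mul _) ((hint l).const_mul _), integral_const,
    integral_const_mul, integral_const_mul, integral_apply_of_eq_single hxm hx hp0 hp,
    integral_apply_of_eq_single hxm hx hp0 hp, hx2]
  simp only [probReal_univ, one_smul]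
  ring

end OneHot

section Multinomial

variable {Ω ι κ : Type*} [MeasurableSpace Ω] {μ : Measure Ω} [IsProbabilityMeasure μ]
  [Countable ι] [DecidableEq ι] [DecidableEq κ] {n : ℕ}
  {P : Matrix κ ι ℝ} {X : κ → Fin n → Ω → ι → ℝ}
  (hP0 : ∀ i l, 0 ≤ P i l) (hXmeas : ∀ i j, Measurable (X i j))
  (hXval : ∀ i j ω, ∃ k, X i j ω = Pi.single k 1)
  (hXprob : ∀ i j k, μ {ω | X i j ω = Pi.single k 1} = ENNReal.ofReal (P i k))
  (hXindep : iIndepFun (fun p : κ × Fin n => X p.1 p.2) μ)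
include hP0 hXmeas hXval hXprob hXindep

lemma integral_sub_sample_mul_sub_sample (i : κ) (j : Fin n) (i' : κ) (j' : Fin n) (l l' : ι) :
    ∫ ω, (P i l - X i j ω l) * (P i' l' - X i' j' ω l') ∂μ
      = if (i, j) = (i', j') then (if l = l' then P i l else 0) - P i l * P i l' else 0 := by
  by_cases h : (i, j) = (i', j')
  · obtain ⟨rfl, rfl⟩ := Prod.ext_iff.mp h
    rw [if_pos rfl]
    exact integral_sub_apply_mul_sub_apply_of_eq_single (hXmeas i j) (hXval i j) (hP0 i)
      (hXprob i j) l l'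
  · have hind : IndepFun (fun ω => P i l - X i j ω l) (fun ω => P i' l' - X i' j' ω l') μ :=
      (hXindep.indepFun h).comp (measurable_const.sub (measurable_pi_apply l))
        (measurable_const.sub (measurable_pi_apply l'))
    rw [if_neg h, hind.integral_fun_mul_eq_mul_integral
      (measurable_const.sub ((measurable_pi_apply l).comp (hXmeas i j))).aestronglyMeasurable
      (measurable_const.sub ((measurable_pi_apply l').comp (hXmeas i' j'))).aestronglyMeasurable,
      integral_sub_apply_of_eq_single (hXmeas i j) (hXval i j) (hP0 i) (hXprob i j), zero_mul]

theorem hasUncorrelatedRows_deviation (hn : 0 < n) :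
    HasUncorrelatedRows μ (fun ω => P - Matrix.of fun i l => (n : ℝ)⁻¹ * ∑ j, X i j ω l)
      (fun i => (n : ℝ)⁻¹ • (diagonal (P i) - vecMulVec (P i) (P i))) := by
  have hn' : (n : ℝ) ≠ 0 := Nat.cast_ne_zero.mpr hn.ne'
  have hdev : ∀ ω i l, (P - Matrix.of fun i l => (n : ℝ)⁻¹ * ∑ j, X i j ω l) i l
      = (n : ℝ)⁻¹ * ∑ j, (P i l - X i j ω l) := fun ω i l => by
    rw [Matrix.sub_apply, of_apply, Finset.sum_sub_distrib, Finset.sum_const, Finset.card_univ,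
      Fintype.card_fin, nsmul_eq_mul]
    field_simp
  have hint : ∀ i i' l l' j j',
      Integrable (fun ω => (P i l - X i j ω l) * (P i' l' - X i' j' ω l')) μ :=
    fun i i' l l' j j' => integrable_sub_apply_mul_sub_apply_of_eq_single (hXmeas i j) (hXval i j)
      (hXmeas i' j') (hXval i' j') _ _ l l'
  have hpt : ∀ ω i l i' l', (P - Matrix.of fun i l => (n : ℝ)⁻¹ * ∑ j, X i j ω l) i l
      * (P - Matrix.of fun i l => (n : ℝ)⁻¹ * ∑ j, X i j ω l) i' l'
      = (n : ℝ)⁻¹ ^ 2 * ∑ j, ∑ j', (P i l - X i j ω l) * (P i' l' - X i' j' ω l') :=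
    fun ω i l i' l' => by rw [hdev, hdev, ← Finset.sum_mul_sum]; ring
  refine ⟨fun i l i' l' => ?_, fun i l i' l' => ?_⟩
  · simpa only [hpt] using (integrable_finsetSum _ fun j _ => integrable_finsetSum _ fun j' _ =>
      hint i i' l l' j j').const_mul ((n : ℝ)⁻¹ ^ 2)
  · simp only [hpt]
    rw [integral_const_mul, integral_finsetSum _ fun j _ => integrable_finsetSum _ fun j' _ =>
      hint i i' l l' j j']
    simp only [integral_finsetSum _ fun j' _ => hint i i' l l' _ j',
      integral_sub_sample_mul_sub_sample hP0 hXmeas hXval hXprob hXindep, Prod.mk.injEq]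
    rcases eq_or_ne i i' with rfl | hii
    · simp only [true_and, Finset.sum_ite_eq, Finset.mem_univ, if_true, Finset.sum_const,
        Finset.card_univ, Fintype.card_fin, nsmul_eq_mul, Matrix.smul_apply, Matrix.sub_apply,
        diagonal_apply, vecMulVec_apply, smul_eq_mul]
      field_simp
    · simp [hii]

end Multinomial

theorem stmt6_general {N : ℕ} {Ω : Type*} [MeasurableSpace Ω] (μ : Measure Ω) [IsProbabilityMeasure μ]
    (P : Matrix (Fin N) (Fin N) ℝ) (hP0 : ∀ i j, 0 ≤ P i j)
    (γ : ℝ)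
    (n : ℕ) (hn : 0 < n)
    (X : Fin N → Fin n → Ω → (Fin N → ℝ))
    (hXmeas : ∀ i j, Measurable (X i j))
    (hXval : ∀ i j ω, ∃ k : Fin N, X i j ω = Pi.single k 1)
    (hXprob : ∀ i j k, μ {ω | X i j ω = Pi.single k 1} = ENNReal.ofReal (P i k))
    (hXindep : iIndepFun (fun p : Fin N × Fin n => X p.1 p.2) μ)
    (M : Matrix (Fin N) (Fin N) ℝ)
    (b : Fin N → ℝ)
    (S : Matrix (Fin N) (Fin N) ℝ) :
    letI A : Matrix (Fin N) (Fin N) ℝ := 1 - γ • P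
    letI Phat : Ω → Matrix (Fin N) (Fin N) ℝ :=
      fun ω => Matrix.of fun i l => (n : ℝ)⁻¹ * ∑ j, X i j ω l
    letI Yhat : Ω → Matrix (Fin N) (Fin N) ℝ := fun ω => (γ • (P - Phat ω)) * A⁻¹
    letI B : Fin N → Matrix (Fin N) (Fin N) ℝ :=
      fun i => (n : ℝ)⁻¹ • (Matrix.diagonal (P i) - Matrix.vecMulVec (P i) (P i))
    letI G : Matrix (Fin N) (Fin N) ℝ := γ ^ 2 • ((A⁻¹)ᵀ * (∑ i, M i i • B i) * A⁻¹)
    letI H : Matrix (Fin N) (Fin N) ℝ :=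
      γ ^ 2 • ((∑ i, (A⁻¹)ᵀ * B i * A⁻¹ * Matrix.single i i (1 : ℝ)) * M)
        + γ ^ 2 • (M * ∑ i, Matrix.single i i (1 : ℝ) * (A⁻¹)ᵀ * B i * A⁻¹)
    ((Matrix.of fun j k => ∫ ω, ((Yhat ω)ᵀ * M * Yhat ω) j k ∂μ) = G)
    ∧ ((Matrix.of fun j k => ∫ ω, (M * Yhat ω ^ 2 + (Yhat ω)ᵀ ^ 2 * M) j k ∂μ) = H)
    ∧ (b ⬝ᵥ ((M + G + H) *ᵥ b) + Matrix.trace (S * (M + G + H)) ≠ 0 →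
        (∫ ω, b ⬝ᵥ ((M + (2 : ℝ)⁻¹ • (M * Yhat ω ^ 2 + (Yhat ω)ᵀ ^ 2 * M)) *ᵥ b) ∂μ)
          / ((∫ ω, b ⬝ᵥ
                ((M + (Yhat ω)ᵀ * M * Yhat ω + M * Yhat ω ^ 2 + (Yhat ω)ᵀ ^ 2 * M) *ᵥ b) ∂μ)
            + ∫ ω, Matrix.trace
                (S * (M + (Yhat ω)ᵀ * M * Yhat ω + M * Yhat ω ^ 2 + (Yhat ω)ᵀ ^ 2 * M)) ∂μ)
          = (b ⬝ᵥ ((M + (2 : ℝ)⁻¹ • H) *ᵥ b))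
            / (b ⬝ᵥ ((M + G + H) *ᵥ b) + Matrix.trace (S * (M + G + H)))) := by
  have hY := ((hasUncorrelatedRows_deviation hP0 hXmeas hXval hXprob hXindep hn).smul γ).mul_right
    (1 - γ • P)⁻¹
  have hQ₁ := hY.entrywiseIntegrable_transpose_mul_mul M
  have hQ₂ := hY.entrywiseIntegrable_mul_sq_add_transpose_sq_mul M
  have hG := (hY.entrywiseIntegral_transpose_mul_mul M).trans
    (sum_smul_transpose_mul_smul_mul M _ _ _)
  have hH := (hY.entrywiseIntegral_mul_sq_add_transpose_sq_mul M).trans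
    (sum_conj_mul_single_mul_add_mul_sum_single_mul_conj M _ _ _)
  refine ⟨hG, hH, fun _ => ?_⟩
  have hM := entrywiseIntegrable_const (μ := μ) M
  -- regroup so that `M * Ŷ ^ 2 + (Ŷᵀ) ^ 2 * M`, whose expectation is `H`, is a single summand
  simp only [add_assoc]
  rw [integral_dotProduct_mulVec (hM.add (hQ₂.const_smul _)),
    integral_dotProduct_mulVec (hM.add (hQ₁.add hQ₂)), integral_trace_mul (hM.add (hQ₁.add hQ₂)),
    entrywiseIntegral_add hM (hQ₂.const_smul _), entrywiseIntegral_add hM (hQ₁.add hQ₂),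
    entrywiseIntegral_add hQ₁ hQ₂, entrywiseIntegral_const, entrywiseIntegral_smul, hG, hH]

/-- Multinomial sampling model: `P` row-stochastic with rows `p_i`,
`γ ∈ (0,1)`, `n ≥ 1`, and `{X_{ij}}` mutually independent random vectors taking values among
the standard basis vectors of `ℝ^N` with `ℙ[X_{ij} = e_k] = P_{ik}`. `P̂` has `i`-th row
`(1/n) Σ_j X_{ij}ᵀ`, `A = I − γP`, `Ŷ = γ(P − P̂)A⁻¹`. With
`B_i = (1/n)(diag(p_i) − p_i p_iᵀ)`, `G = γ² A⁻ᵀ(Σ_i M_{ii} B_i)A⁻¹`, and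
`H = γ²(Σ_i A⁻ᵀ B_i A⁻¹ diag(e_i))M + γ² M(Σ_i diag(e_i) A⁻ᵀ B_i A⁻¹)`, one has
`E[Ŷᵀ M Ŷ] = G`, `E[M Ŷ² + (Ŷᵀ)² M] = H`, and the second-order factor `ε°` equals
`bᵀ(M + H/2)b / (bᵀ(M + G + H)b + tr(Σ(M + G + H)))` whenever this denominator is nonzero. -/
theorem stmt6 {N : ℕ} {Ω : Type*} [MeasurableSpace Ω] (μ : Measure Ω) [IsProbabilityMeasure μ]
    (P : Matrix (Fin N) (Fin N) ℝ) (hP0 : ∀ i j, 0 ≤ P i j) (hP1 : ∀ i, ∑ j, P i j = 1)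
    (γ : ℝ) (hγ : γ ∈ Set.Ioo (0 : ℝ) 1)
    (n : ℕ) (hn : 0 < n)
    (X : Fin N → Fin n → Ω → (Fin N → ℝ))
    (hXmeas : ∀ i j, Measurable (X i j))
    (hXval : ∀ i j ω, ∃ k : Fin N, X i j ω = Pi.single k 1)
    (hXprob : ∀ i j k, μ {ω | X i j ω = Pi.single k 1} = ENNReal.ofReal (P i k))
    (hXindep : iIndepFun (fun p : Fin N × Fin n => X p.1 p.2) μ)
    (M : Matrix (Fin N) (Fin N) ℝ) (hM : M.PosDef)
    (b : Fin N → ℝ)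
    (S : Matrix (Fin N) (Fin N) ℝ) (hS : S.PosSemidef) :
    letI A : Matrix (Fin N) (Fin N) ℝ := 1 - γ • P
    letI Phat : Ω → Matrix (Fin N) (Fin N) ℝ :=
      fun ω => Matrix.of fun i l => (n : ℝ)⁻¹ * ∑ j, X i j ω l
    letI Yhat : Ω → Matrix (Fin N) (Fin N) ℝ := fun ω => (γ • (P - Phat ω)) * A⁻¹
    letI B : Fin N → Matrix (Fin N) (Fin N) ℝ :=
      fun i => (n : ℝ)⁻¹ • (Matrix.diagonal (P i) - Matrix.vecMulVec (P i) (P i))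
    letI G : Matrix (Fin N) (Fin N) ℝ := γ ^ 2 • ((A⁻¹)ᵀ * (∑ i, M i i • B i) * A⁻¹)
    letI H : Matrix (Fin N) (Fin N) ℝ :=
      γ ^ 2 • ((∑ i, (A⁻¹)ᵀ * B i * A⁻¹ * Matrix.single i i (1 : ℝ)) * M)
        + γ ^ 2 • (M * ∑ i, Matrix.single i i (1 : ℝ) * (A⁻¹)ᵀ * B i * A⁻¹)
    ((Matrix.of fun j k => ∫ ω, ((Yhat ω)ᵀ * M * Yhat ω) j k ∂μ) = G)
    ∧ ((Matrix.of fun j k => ∫ ω, (M * Yhat ω ^ 2 + (Yhat ω)ᵀ ^ 2 * M) j k ∂μ) = H)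
    ∧ (b ⬝ᵥ ((M + G + H) *ᵥ b) + Matrix.trace (S * (M + G + H)) ≠ 0 →
        (∫ ω, b ⬝ᵥ ((M + (2 : ℝ)⁻¹ • (M * Yhat ω ^ 2 + (Yhat ω)ᵀ ^ 2 * M)) *ᵥ b) ∂μ)
          / ((∫ ω, b ⬝ᵥ
                ((M + (Yhat ω)ᵀ * M * Yhat ω + M * Yhat ω ^ 2 + (Yhat ω)ᵀ ^ 2 * M) *ᵥ b) ∂μ)
            + ∫ ω, Matrix.trace
                (S * (M + (Yhat ω)ᵀ * M * Yhat ω + M * Yhat ω ^ 2 + (Yhat ω)ᵀ ^ 2 * M)) ∂μ)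
          = (b ⬝ᵥ ((M + (2 : ℝ)⁻¹ • H) *ᵥ b))
            / (b ⬝ᵥ ((M + G + H) *ᵥ b) + Matrix.trace (S * (M + G + H)))) :=
  stmt6_general μ P hP0 γ n hn X hXmeas hXval hXprob hXindep M b S
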